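/- (Addition theorem for q-Euler polynomials.) For all x, y ∈ ℂ and every integer n ≥ 0: E_{n,q}(x,y) = Σ_{k=0}^{n} [n choose k]_q e_{k,q} (x ⊕_q y)^{n−k}, and also E_{n,q}(x,y) = Σ_{k=0}^{n} [n choose k]_q ((−1;q)_{n−k}/2^{n−k}) E_{k,q}(x) y^{n−k}. -/

import Mathlib

open Finset PowerSeries

/-- The `q`-number `[n]_q = (1 - q^n)/(1 - q)`. -/
noncomputable def qNum (q : ℂ) (n : ℕ) : ℂ := (1 - q ^ n) / (1 - q)

/-- The `q`-factorial `[n]_q!`. -/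
noncomputable def qFact (q : ℂ) : ℕ → ℂ
  | 0 => 1
  | n + 1 => qNum q (n + 1) * qFact q n

/-- The `q`-shifted factorial `(a; q)_n = ∏_{j=0}^{n-1} (1 - q^j a)`. -/
noncomputable def qShift (a q : ℂ) (n : ℕ) : ℂ := ∏ j ∈ Finset.range n, (1 - q ^ j * a)

/-- The Gaussian binomial coefficient `[n choose k]_q = (q;q)_n / ((q;q)_{n-k} (q;q)_k)`. -/
noncomputable def qBinom (q : ℂ) (n k : ℕ) : ℂ :=
  qShift q q n / (qShift q q (n - k) * qShift q q k)

/-- The formal power series (in `t`) `𝓔_q(tx) = Σ_{n≥0} (-1;q)_n (x)^n t^n / (2^n [n]_q!)`. -/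
noncomputable def qExp (q x : ℂ) : PowerSeries ℂ :=
  PowerSeries.mk fun n => qShift (-1) q n * x ^ n / (2 ^ n * qFact q n)

/-- The generating series `Σ_{n≥0} a_n t^n / [n]_q!` of a sequence `a`. -/
noncomputable def qGen (q : ℂ) (a : ℕ → ℂ) : PowerSeries ℂ :=
  PowerSeries.mk fun n => a n / qFact q n

/-- The `q`-addition `(x ⊕_q y)^n`. -/
noncomputable def qAdd (q x y : ℂ) (n : ℕ) : ℂ :=
  ∑ k ∈ Finset.range (n + 1),
    qBinom q n k * (qShift (-1) q k * qShift (-1) q (n - k) / 2 ^ n) * x ^ k * y ^ (n - k)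

/-! The generating functions of `e_{n,q}`, of `E_{n,q}(x,y)` and of `𝓔_q(tx)` are all of the
form `Σ aₙ tⁿ/[n]_q!`, and for `q` not a root of unity such series multiply by `q`-binomial
convolution, because `[n choose k]_q = [n]_q!/([k]_q! [n-k]_q!)`. In particular `𝓔_q(tx) 𝓔_q(ty)`
is the series of `(x ⊕_q y)ⁿ`. Dividing the defining identities by `𝓔_q(t) + 1` writes the series
of `E_{n,q}(x,y)` both as (series of `e_{n,q}`) · `𝓔_q(tx) 𝓔_q(ty)` and as
(series of `E_{n,q}(x)`) · `𝓔_q(ty)`; comparing coefficients gives the two formulas. -/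

section QExponentialSeries

variable {q : ℂ}

lemma qShift_self_eq (hq : q ≠ 1) (n : ℕ) : qShift q q n = (1 - q) ^ n * qFact q n := by
  induction n with
  | zero => simp [qShift, qFact]
  | succ n ih =>
    have h : (1 : ℂ) - q ≠ 0 := sub_ne_zero.mpr hq.symm
    rw [qShift, prod_range_succ, ← qShift, ih, qFact, qNum]
    field_simp
    ring

lemma qBinom_eq_qFact_div (hq : q ≠ 1) {n k : ℕ} (hk : k ≤ n) :
    qBinom q n k = qFact q n / (qFact q k * qFact q (n - k)) := by
  have h : (1 - q) ^ n ≠ 0 := pow_ne_zero _ (sub_ne_zero.mpr hq.symm)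
  rw [qBinom, qShift_self_eq hq, qShift_self_eq hq, qShift_self_eq hq, mul_mul_mul_comm,
    ← pow_add, Nat.sub_add_cancel hk, mul_div_mul_left _ _ h, mul_comm (qFact q _)]

lemma qFact_ne_zero (hq : ¬IsOfFinOrder q) (n : ℕ) : qFact q n ≠ 0 := by
  induction n with
  | zero => exact one_ne_zero
  | succ n ih =>
    have hpow (m : ℕ) (hm : 0 < m) : 1 - q ^ m ≠ 0 :=
      sub_ne_zero.mpr fun h => hq (isOfFinOrder_iff_pow_eq_one.mpr ⟨m, hm, h.symm⟩)
    exact mul_ne_zero (div_ne_zero (hpow _ n.succ_pos) (by simpa using hpow 1 one_pos)) ih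

noncomputable def qBinomConv (q : ℂ) (a b : ℕ → ℂ) (n : ℕ) : ℂ :=
  ∑ k ∈ range (n + 1), qBinom q n k * a k * b (n - k)

lemma qGen_injective (hq : ¬IsOfFinOrder q) : Function.Injective (qGen q) := by
  intro a b h
  funext n
  have hn := congrArg (coeff n) h
  simp only [qGen, coeff_mk] at hn
  exact (div_left_inj' (qFact_ne_zero hq n)).mp hn

lemma qGen_mul_qGen (hq : ¬IsOfFinOrder q) (a b : ℕ → ℂ) :
    qGen q a * qGen q b = qGen q (qBinomConv q a b) := by
  ext n
  have hq1 : q ≠ 1 := fun h => hq (h ▸ IsOfFinOrder.one)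
  have := qFact_ne_zero hq
  simp only [coeff_mul, Nat.sum_antidiagonal_eq_sum_range_succ_mk, qGen, coeff_mk, qBinomConv,
    sum_div]
  refine sum_congr rfl fun k hk => ?_
  rw [qBinom_eq_qFact_div hq1 (Nat.lt_succ_iff.mp (mem_range.mp hk))]
  field_simp
  exact (mul_div_mul_right _ _ (this n)).symm

lemma qExp_eq_qGen (q x : ℂ) : qExp q x = qGen q fun n => qShift (-1) q n / 2 ^ n * x ^ n := by
  ext n
  simp only [qExp, qGen, coeff_mk]
  ring

lemma qExp_zero (q : ℂ) : qExp q 0 = 1 := by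
  ext (_ | n) <;> simp [qExp, qShift, qFact]

lemma qExp_mul_qExp (hq : ¬IsOfFinOrder q) (x y : ℂ) :
    qExp q x * qExp q y = qGen q (qAdd q x y) := by
  rw [qExp_eq_qGen, qExp_eq_qGen, qGen_mul_qGen hq]
  congr 1
  funext n
  refine sum_congr rfl fun k hk => ?_
  rw [← Nat.add_sub_cancel' (Nat.lt_succ_iff.mp (mem_range.mp hk)), pow_add,
    Nat.add_sub_cancel_left]
  field_simp

end QExponentialSeries

theorem qEuler_addition_general (q : ℂ) (hq1 : ‖q‖ < 1)
    (e : ℕ → ℂ) (he : qGen q e * (qExp q 1 + 1) = 2)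
    (E : ℂ → ℂ → ℕ → ℂ)
    (hE : ∀ x y : ℂ, qGen q (E x y) * (qExp q 1 + 1) = 2 * qExp q x * qExp q y)
    (x y : ℂ) (n : ℕ) :
    E x y n = ∑ k ∈ Finset.range (n + 1), qBinom q n k * e k * qAdd q x y (n - k) ∧
    E x y n = ∑ k ∈ Finset.range (n + 1),
      qBinom q n k * (qShift (-1) q (n - k) / 2 ^ (n - k)) * E x 0 k * y ^ (n - k) := by
  have hq : ¬IsOfFinOrder q := fun h => hq1.ne h.norm_eq_one
  have hD : qExp q 1 + 1 ≠ 0 := fun h => by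
    simpa [h, map_ofNat] using congrArg constantCoeff he
  have hgen (x y : ℂ) : qGen q (E x y) = qGen q e * (qExp q x * qExp q y) :=
    mul_right_cancel₀ hD (by rw [hE, ← he]; ring)
  constructor
  · have hprod := hgen x y
    rw [qExp_mul_qExp hq, qGen_mul_qGen hq] at hprod
    exact congrFun (qGen_injective hq hprod) n
  · have hsplit : qGen q (E x y) = qGen q (E x 0) * qExp q y := by
      rw [hgen, hgen x 0, qExp_zero, mul_one, mul_assoc]
    rw [qExp_eq_qGen, qGen_mul_qGen hq] at hsplit
    rw [congrFun (qGen_injective hq hsplit) n, qBinomConv]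
    exact sum_congr rfl fun k _ => by ring

/-- Addition theorem for the `q`-Euler polynomials `E_{n,q}(x,y)`, defined by
`(2/(𝓔_q(t)+1)) 𝓔_q(tx) 𝓔_q(ty) = Σ_{n≥0} E_{n,q}(x,y) t^n/[n]_q!`, in terms of the
`q`-Euler numbers `e_{n,q}` defined by `2/(𝓔_q(t)+1) = Σ_{n≥0} e_{n,q} t^n/[n]_q!`. -/
theorem qEuler_addition (q : ℂ) (hq0 : 0 < ‖q‖) (hq1 : ‖q‖ < 1)
    (e : ℕ → ℂ) (he : qGen q e * (qExp q 1 + 1) = 2)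
    (E : ℂ → ℂ → ℕ → ℂ)
    (hE : ∀ x y : ℂ, qGen q (E x y) * (qExp q 1 + 1) = 2 * qExp q x * qExp q y)
    (x y : ℂ) (n : ℕ) :
    E x y n = ∑ k ∈ Finset.range (n + 1), qBinom q n k * e k * qAdd q x y (n - k) ∧
    E x y n = ∑ k ∈ Finset.range (n + 1),
      qBinom q n k * (qShift (-1) q (n - k) / 2 ^ (n - k)) * E x 0 k * y ^ (n - k) :=
  qEuler_addition_general q hq1 e he E hE x y n
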